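/- Let n ≥ 3, let U ⊆ ℝⁿ be open, and let u : ℝⁿ → ℝ be twice continuously differentiable, strictly positive, and harmonic on U. Set v = u^{−2/(n−2)}. If there is a constant c ∈ ℝ such that D²v(x) = c·Id for all x ∈ U, then |Du| is constant on every level set of u contained in U; that is, for all x, y ∈ U with u(x) = u(y) one has |Du(x)| = |Du(y)|. -/

import Mathlib

/-!
For `f > 0` of class `C²`, the chain and product rules give
`Δ(f ^ a) = a f ^ (a - 1) Δf + a (a - 1) f ^ (a - 2) |Df|²`.
If `u` is harmonic and `D²v = c • Id` then `Δv = n c`, so for `a = -2/(n-2)`, where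
`a (a - 1) > 0`, `|Du|² = n c u ^ (2 - a) / (a (a - 1))` is a function of `u` alone.
-/

/-- Partial derivative `∂_i f` of a function on `ℝⁿ`. -/
noncomputable def pd {n : ℕ} (i : Fin n) (f : (Fin n → ℝ) → ℝ) (x : Fin n → ℝ) : ℝ :=
  fderiv ℝ f x (Pi.single i 1)

/-- Laplacian `Δf = ∑ᵢ ∂ᵢᵢ f`. -/
noncomputable def lap {n : ℕ} (f : (Fin n → ℝ) → ℝ) (x : Fin n → ℝ) : ℝ :=
  ∑ i, pd i (pd i f) x

open Filter Topology

section PartialDerivatives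

variable {n : ℕ} {f g : (Fin n → ℝ) → ℝ} {x : Fin n → ℝ} {i : Fin n}

theorem HasFDerivAt.pd_eq {f' : (Fin n → ℝ) →L[ℝ] ℝ} (h : HasFDerivAt f f' x) :
    pd i f x = f' (Pi.single i 1) := by
  rw [pd, h.fderiv]

theorem pd_congr (h : f =ᶠ[𝓝 x] g) : pd i f x = pd i g x := by
  rw [pd, pd, h.fderiv_eq]

theorem pd_mul (hf : DifferentiableAt ℝ f x) (hg : DifferentiableAt ℝ g x) :
    pd i (fun y => f y * g y) x = f x * pd i g x + g x * pd i f x := by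
  have h : HasFDerivAt (fun y => f y * g y) _ x := hf.hasFDerivAt.mul hg.hasFDerivAt
  rw [h.pd_eq]
  simp [pd]

theorem pd_rpow (hf : DifferentiableAt ℝ f x) (hx : f x ≠ 0) (a : ℝ) :
    pd i (fun y => f y ^ a) x = a * f x ^ (a - 1) * pd i f x := by
  rw [(hf.hasFDerivAt.rpow_const (Or.inl hx) (p := a)).pd_eq]
  simp [pd, mul_assoc]

theorem ContDiffOn.differentiableAt_pd {U : Set (Fin n → ℝ)} (hU : IsOpen U)
    (hf : ContDiffOn ℝ 2 f U) (hx : x ∈ U) : DifferentiableAt ℝ (pd i f) x := by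
  have hDf : ContDiffOn ℝ 1 (fderiv ℝ f) U := hf.fderiv_of_isOpen hU (by norm_num)
  have hpd : ContDiffOn ℝ 1 (pd i f) U :=
    (ContinuousLinearMap.apply ℝ ℝ (Pi.single i 1 : Fin n → ℝ)).contDiff.comp_contDiffOn hDf
  exact (hpd.contDiffAt (hU.mem_nhds hx)).differentiableAt (by norm_num)

end PartialDerivatives

section Laplacian

variable {n : ℕ} {U : Set (Fin n → ℝ)} {f : (Fin n → ℝ) → ℝ} {x : Fin n → ℝ}

theorem pd_pd_rpow (hU : IsOpen U) (hf : ContDiffOn ℝ 2 f U) (hpos : ∀ y ∈ U, 0 < f y)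
    (a : ℝ) (hx : x ∈ U) (i : Fin n) :
    pd i (pd i (fun y => f y ^ a)) x =
      a * f x ^ (a - 1) * pd i (pd i f) x + a * (a - 1) * f x ^ (a - 2) * pd i f x ^ 2 := by
  have hdiff : ∀ y ∈ U, DifferentiableAt ℝ f y := fun y hy =>
    (hf.contDiffAt (hU.mem_nhds hy)).differentiableAt (by norm_num)
  have hfirst : pd i (fun y => f y ^ a) =ᶠ[𝓝 x] fun y => a * f y ^ (a - 1) * pd i f y := by
    filter_upwards [hU.mem_nhds hx] with y hy
    exact pd_rpow (hdiff y hy) (hpos y hy).ne' a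
  have hcoeff : DifferentiableAt ℝ (fun y => a * f y ^ (a - 1)) x :=
    ((hdiff x hx).rpow_const (Or.inl (hpos x hx).ne')).const_mul a
  rw [pd_congr hfirst, pd_mul hcoeff (hf.differentiableAt_pd hU hx)]
  have hcoeff_pd :
      pd i (fun y => a * f y ^ (a - 1)) x = a * ((a - 1) * f x ^ (a - 2) * pd i f x) := by
    rw [(((hdiff x hx).hasFDerivAt.rpow_const (Or.inl (hpos x hx).ne')).const_mul a).pd_eq]
    simp [pd, show a - 1 - 1 = a - 2 by ring]
  rw [hcoeff_pd]
  ring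

theorem lap_rpow (hU : IsOpen U) (hf : ContDiffOn ℝ 2 f U) (hpos : ∀ y ∈ U, 0 < f y)
    (a : ℝ) (hx : x ∈ U) :
    lap (fun y => f y ^ a) x =
      a * f x ^ (a - 1) * lap f x + a * (a - 1) * f x ^ (a - 2) * ∑ i, pd i f x ^ 2 := by
  simp only [lap, pd_pd_rpow hU hf hpos a hx, Finset.sum_add_distrib, Finset.mul_sum]

theorem lap_eq_of_pd_pd_eq_smul_id {c : ℝ}
    (h : ∀ i j : Fin n, pd j (pd i f) x = c * (if i = j then 1 else 0)) :
    lap f x = n * c := by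
  simp [lap, h]

theorem sum_sq_pd_eq_of_lap_rpow_eq (hU : IsOpen U) (hf : ContDiffOn ℝ 2 f U)
    (hpos : ∀ y ∈ U, 0 < f y) (hx : x ∈ U) (hharm : lap f x = 0) {a k : ℝ}
    (ha : a * (a - 1) ≠ 0)
    (hk : lap (fun y => f y ^ a) x = k) :
    ∑ i, pd i f x ^ 2 = k * f x ^ (2 - a) / (a * (a - 1)) := by
  rw [lap_rpow hU hf hpos a hx, hharm] at hk
  have hcancel : f x ^ (a - 2) * f x ^ (2 - a) = 1 := by
    rw [← Real.rpow_add (hpos x hx)]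
    simp
  rw [← hk, eq_div_iff ha]
  linear_combination -(a * (a - 1) * ∑ i, pd i f x ^ 2) * hcancel

end Laplacian

/-- If `u > 0` is `C²` and harmonic on `U ⊆ ℝⁿ` (`n ≥ 3`), `v = u^{−2/(n−2)}`, and
`D²v = c·Id` on `U`, then `|Du|` is constant on every level set of `u` in `U`. -/
theorem stmt_15 (n : ℕ) (hn : 3 ≤ n) (U : Set (Fin n → ℝ)) (hU : IsOpen U)
    (u : (Fin n → ℝ) → ℝ) (hu : ContDiffOn ℝ 2 u U) (hpos : ∀ x ∈ U, 0 < u x)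
    (hharm : ∀ x ∈ U, lap u x = 0)
    (v : (Fin n → ℝ) → ℝ) (hv : v = fun y => u y ^ (-(2 : ℝ) / ((n : ℝ) - 2)))
    (c : ℝ)
    (hhess : ∀ x ∈ U, ∀ i j : Fin n,
      pd j (pd i v) x = c * (if i = j then 1 else 0)) :
    ∀ x ∈ U, ∀ y ∈ U, u x = u y →
      Real.sqrt (∑ i, (pd i u x) ^ 2) = Real.sqrt (∑ i, (pd i u y) ^ 2) := by
  intro x hx y hy hxy
  set α : ℝ := -(2 : ℝ) / ((n : ℝ) - 2)
  have hα : α * (α - 1) ≠ 0 := by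
    have hn' : (3 : ℝ) ≤ n := by exact_mod_cast hn
    have hαneg : α < 0 := div_neg_of_neg_of_pos (by norm_num) (by linarith)
    exact (mul_pos_of_neg_of_neg hαneg (by linarith)).ne'
  have hlap : ∀ z ∈ U, lap v z = n * c := fun z hz =>
    lap_eq_of_pd_pd_eq_smul_id (hhess z hz)
  subst hv
  rw [sum_sq_pd_eq_of_lap_rpow_eq hU hu hpos hx (hharm x hx) hα (hlap x hx),
    sum_sq_pd_eq_of_lap_rpow_eq hU hu hpos hy (hharm y hy) hα (hlap y hy), hxy]
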